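/- If (U, R, 𝓕) is a topological sL-approximation space (respectively, a topological L-approximation space), then (𝔠(U, R, 𝓕), ⊆) is an algebraic domain that is an sL-domain (respectively, an algebraic domain that is an L-domain). -/

import Mathlib

open Set

/-- The upper approximation operator: `upp R A = {x | ∃ y ∈ A, x R y}`. -/
def upp {U : Type*} (R : U → U → Prop) (A : Set U) : Set U := {x | ∃ y ∈ A, R x y}

/-- `(U, R, 𝓕)` is a CF-approximation space. -/
def IsCFApprox {U : Type*} (R : U → U → Prop) (𝓕 : Set (Set U)) : Prop :=
  Transitive R ∧ 𝓕.Nonempty ∧ (∀ F ∈ 𝓕, F.Finite) ∧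
    ∀ F ∈ 𝓕, ∀ K : Set U, K.Finite → K ⊆ upp R F →
      ∃ G ∈ 𝓕, K ⊆ upp R G ∧ G ⊆ upp R F

/-- `E` is a CF-closed set of `(U, R, 𝓕)`. -/
def CFClosed {U : Type*} (R : U → U → Prop) (𝓕 : Set (Set U)) (E : Set U) : Prop :=
  ∀ K : Set U, K.Finite → K ⊆ E →
    ∃ F ∈ 𝓕, K ⊆ upp R F ∧ upp R F ⊆ E ∧ F ⊆ E

/-- The join saturation `𝓕^♯`: all unions of nonempty finite subfamilies of `𝓕`. -/
def joinSat {U : Type*} (𝓕 : Set (Set U)) : Set (Set U) :=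
  {A | ∃ 𝓐 : Set (Set U), 𝓐 ⊆ 𝓕 ∧ 𝓐.Finite ∧ 𝓐.Nonempty ∧ A = ⋃₀ 𝓐}

/-- `S(M, F)`: the set of `G ∈ 𝓕` satisfying (sL-1) and (sL-2). -/
def SFam {U : Type*} (R : U → U → Prop) (𝓕 : Set (Set U)) (M F : Set U) : Set (Set U) :=
  {G | G ∈ 𝓕 ∧ upp R M ⊆ upp R G ∧ upp R G ⊆ upp R F ∧
    ∀ G' ∈ 𝓕, upp R M ⊆ upp R G' → upp R G' ⊆ upp R F → upp R G ⊆ upp R G'}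

/-- `S*(M, F) = {G ∈ S(M, F) | G ⊆ upp R F}`. -/
def SStar {U : Type*} (R : U → U → Prop) (𝓕 : Set (Set U)) (M F : Set U) : Set (Set U) :=
  {G | G ∈ SFam R 𝓕 M F ∧ G ⊆ upp R F}

/-- sL-approximation space. -/
def IsSLApprox {U : Type*} (R : U → U → Prop) (𝓕 : Set (Set U)) : Prop :=
  IsCFApprox R 𝓕 ∧
    ∀ M ∈ joinSat 𝓕, ∀ F ∈ 𝓕, M ⊆ upp R F → (SFam R 𝓕 M F).Nonempty

/-- L-approximation space. -/
def IsLApprox {U : Type*} (R : U → U → Prop) (𝓕 : Set (Set U)) : Prop :=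
  IsCFApprox R 𝓕 ∧
    ∀ M ∈ joinSat 𝓕 ∪ {(∅ : Set U)}, ∀ F ∈ 𝓕, M ⊆ upp R F → (SFam R 𝓕 M F).Nonempty

/-- bc-approximation space. -/
def IsBCApprox {U : Type*} (R : U → U → Prop) (𝓕 : Set (Set U)) : Prop :=
  IsCFApprox R 𝓕 ∧
    ∀ M ∈ joinSat 𝓕 ∪ {(∅ : Set U)}, ∀ F ∈ 𝓕, M ⊆ upp R F →
      ∃ G ∈ 𝓕, upp R M ⊆ upp R G ∧ upp R G ⊆ upp R F ∧
        ∀ G' ∈ 𝓕, upp R M ⊆ upp R G' → upp R G ⊆ upp R G'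

/-- A dcpo: every (nonempty) directed subset has a supremum. -/
def IsDcpo (P : Type*) [PartialOrder P] : Prop :=
  ∀ D : Set P, D.Nonempty → DirectedOn (· ≤ ·) D → ∃ s, IsLUB D s

/-- The way-below relation `x ≪ y`. -/
def WayBelow {P : Type*} [PartialOrder P] (x y : P) : Prop :=
  ∀ D : Set P, D.Nonempty → DirectedOn (· ≤ ·) D →
    ∀ s, IsLUB D s → y ≤ s → ∃ d ∈ D, x ≤ d

/-- Continuous domain: a dcpo in which for every `x` the set `{z | z ≪ x}` is
directed with supremum `x`. -/
def IsContinuousDomain (P : Type*) [PartialOrder P] : Prop :=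
  IsDcpo P ∧ ∀ x : P, {z | WayBelow z x}.Nonempty ∧
    DirectedOn (· ≤ ·) {z | WayBelow z x} ∧ IsLUB {z | WayBelow z x} x

/-- Algebraic domain: a dcpo in which for every `x` the set `↓x ∩ K(P)` is
directed with supremum `x`. -/
def IsAlgebraicDomain (P : Type*) [PartialOrder P] : Prop :=
  IsDcpo P ∧ ∀ x : P, ({k | k ≤ x ∧ WayBelow k k}).Nonempty ∧
    DirectedOn (· ≤ ·) {k | k ≤ x ∧ WayBelow k k} ∧
    IsLUB {k | k ≤ x ∧ WayBelow k k} x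

/-- sL-domain: a continuous domain in which every principal ideal is a
sup-semilattice. -/
def IsSLDomain (P : Type*) [PartialOrder P] : Prop :=
  IsContinuousDomain P ∧ ∀ x a b : P, a ≤ x → b ≤ x →
    ∃ s, s ≤ x ∧ a ≤ s ∧ b ≤ s ∧ ∀ t, t ≤ x → a ≤ t → b ≤ t → s ≤ t

/-- L-domain: a continuous domain in which every principal ideal is a
complete lattice (every subset of `↓x` has a least upper bound in `↓x`). -/
def IsLDomain (P : Type*) [PartialOrder P] : Prop :=
  IsContinuousDomain P ∧ ∀ (x : P) (A : Set P), (∀ a ∈ A, a ≤ x) →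
    ∃ s, s ≤ x ∧ (∀ a ∈ A, a ≤ s) ∧ ∀ t, t ≤ x → (∀ a ∈ A, a ≤ t) → s ≤ t

/-- bc-domain: a continuous domain in which every up-bounded subset has a
supremum. -/
def IsBCDomain (P : Type*) [PartialOrder P] : Prop :=
  IsContinuousDomain P ∧ ∀ A : Set P, (∃ b, ∀ a ∈ A, a ≤ b) → ∃ s, IsLUB A s

/-!
Directed unions of CF-closed sets are CF-closed, and the sets `upp R F` with `F ∈ 𝓕` are compact
elements forming a directed basis below every CF-closed set, so `𝔠(U, R, 𝓕)` is algebraic.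

For suprema inside `↓E`: if `M` is a finite union of members of `𝓕` lying below the given
elements, the sL-condition makes the compact elements `upp R G` between `upp R M` and `E` have a
least one. Along a directed family of such `M` these least elements form a directed union, which is
the least CF-closed upper bound below `E`. For the empty family (a least element of `↓E`) the
only `M` is `∅`, and `S(∅, F) ≠ ∅` is exactly what the L-condition adds.
-/

theorem DirectedOn.exists_mem_subset_of_finite_subset_biUnion {α ι : Type*} {f : ι → Set α}
    {c : Set ι} (hn : c.Nonempty) (hc : DirectedOn (fun i j => f i ⊆ f j) c) {s : Set α}
    (hs : s.Finite) (hsc : s ⊆ ⋃ i ∈ c, f i) : ∃ i ∈ c, s ⊆ f i := by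
  rw [← hs.coe_toFinset] at hsc ⊢
  exact DirectedOn.exists_mem_subset_of_finset_subset_biUnion hn hc hsc

section Order

variable {P : Type*} [PartialOrder P]

theorem WayBelow.le {x y : P} (h : WayBelow x y) : x ≤ y := by
  obtain ⟨d, hd, hxd⟩ := h {y} (singleton_nonempty y) (directedOn_singleton y) y
    isLUB_singleton le_rfl
  rwa [mem_singleton_iff.1 hd] at hxd

theorem WayBelow.trans_le {x y z : P} (h : WayBelow x y) (hyz : y ≤ z) : WayBelow x z :=
  fun D hne hdir s hs hzs => h D hne hdir s hs (hyz.trans hzs)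

theorem IsAlgebraicDomain.of_compact_basis (hd : IsDcpo P) (B : P → Set P)
    (hcompact : ∀ x, ∀ k ∈ B x, WayBelow k k) (hne : ∀ x, (B x).Nonempty)
    (hdir : ∀ x, DirectedOn (· ≤ ·) (B x)) (hlub : ∀ x, IsLUB (B x) x) :
    IsAlgebraicDomain P := by
  refine ⟨hd, fun x => ?_⟩
  have hB : B x ⊆ {k | k ≤ x ∧ WayBelow k k} := fun k hk => ⟨(hlub x).1 hk, hcompact x k hk⟩
  refine ⟨(hne x).mono hB, ?_, fun k hk => hk.1, fun t ht => (hlub x).2 fun k hk => ht (hB hk)⟩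
  rintro a ⟨hax, ha⟩ b ⟨hbx, hb⟩
  obtain ⟨d, hd, had⟩ := ha _ (hne x) (hdir x) x (hlub x) hax
  obtain ⟨e, he, hbe⟩ := hb _ (hne x) (hdir x) x (hlub x) hbx
  obtain ⟨k, hk, hdk, hek⟩ := hdir x d hd e he
  exact ⟨k, hB hk, had.trans hdk, hbe.trans hek⟩

theorem IsAlgebraicDomain.isContinuousDomain (h : IsAlgebraicDomain P) :
    IsContinuousDomain P := by
  refine ⟨h.1, fun x => ?_⟩
  obtain ⟨hne, hdir, hlub⟩ := h.2 x
  have hsub : {k | k ≤ x ∧ WayBelow k k} ⊆ {z | WayBelow z x} :=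
    fun k hk => hk.2.trans_le hk.1
  refine ⟨hne.mono hsub, ?_, fun z hz => WayBelow.le hz,
    fun t ht => hlub.2 fun k hk => ht (hsub hk)⟩
  intro a ha b hb
  obtain ⟨ka, hka, haka⟩ := ha _ hne hdir x hlub le_rfl
  obtain ⟨kb, hkb, hbkb⟩ := hb _ hne hdir x hlub le_rfl
  obtain ⟨k, hk, hkak, hkbk⟩ := hdir ka hka kb hkb
  exact ⟨k, hsub hk, haka.trans hkak, hbkb.trans hkbk⟩

end Order

section Approximation

variable {U : Type*} {R : U → U → Prop} {𝓕 : Set (Set U)}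

theorem upp_mono {A B : Set U} (h : A ⊆ B) : upp R A ⊆ upp R B :=
  fun _ ⟨y, hy, hr⟩ => ⟨y, h hy, hr⟩

theorem subset_upp (hrefl : Reflexive R) (A : Set U) : A ⊆ upp R A :=
  fun x hx => ⟨x, hx, hrefl x⟩

theorem upp_subset_upp (htrans : Transitive R) {A B : Set U} (h : A ⊆ upp R B) :
    upp R A ⊆ upp R B := by
  rintro x ⟨y, hy, hxy⟩
  obtain ⟨z, hz, hyz⟩ := h hy
  exact ⟨z, hz, htrans hxy hyz⟩

theorem CFClosed.exists_upp_subset {E : Set U} (hE : CFClosed R 𝓕 E) :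
    ∃ F ∈ 𝓕, upp R F ⊆ E ∧ F ⊆ E := by
  obtain ⟨F, hF, -, hFE⟩ := hE ∅ finite_empty (empty_subset E)
  exact ⟨F, hF, hFE⟩

theorem CFClosed.exists_mem_upp {E : Set U} (hE : CFClosed R 𝓕 E) {x : U} (hx : x ∈ E) :
    ∃ F ∈ 𝓕, x ∈ upp R F ∧ upp R F ⊆ E ∧ F ⊆ E := by
  obtain ⟨F, hF, hxF, hFE⟩ := hE {x} (finite_singleton x) (singleton_subset_iff.2 hx)
  exact ⟨F, hF, hxF rfl, hFE⟩

theorem CFClosed.upp_subset (htrans : Transitive R) {E : Set U} (hE : CFClosed R 𝓕 E) :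
    upp R E ⊆ E := by
  rintro x ⟨y, hy, hxy⟩
  obtain ⟨F, -, ⟨z, hz, hyz⟩, hFE, -⟩ := hE.exists_mem_upp hy
  exact hFE ⟨z, hz, htrans hxy hyz⟩

theorem cfClosed_upp (hCF : IsCFApprox R 𝓕) {F : Set U} (hF : F ∈ 𝓕) :
    CFClosed R 𝓕 (upp R F) := by
  intro K hK hKF
  obtain ⟨G, hG, hKG, hGF⟩ := hCF.2.2.2 F hF K hK hKF
  exact ⟨G, hG, hKG, upp_subset_upp hCF.1 hGF, hGF⟩

theorem joinSat_mono {𝓖 : Set (Set U)} (h : 𝓕 ⊆ 𝓖) : joinSat 𝓕 ⊆ joinSat 𝓖 := by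
  rintro _ ⟨𝓐, h𝓐, hfin, hne, rfl⟩
  exact ⟨𝓐, h𝓐.trans h, hfin, hne, rfl⟩

theorem mem_joinSat_of_mem {F : Set U} (hF : F ∈ 𝓕) : F ∈ joinSat 𝓕 :=
  ⟨{F}, singleton_subset_iff.2 hF, finite_singleton F, singleton_nonempty F,
    (sUnion_singleton F).symm⟩

theorem directedOn_joinSat : DirectedOn (· ⊆ ·) (joinSat 𝓕) := by
  rintro _ ⟨𝓐, h𝓐, hfin, hne, rfl⟩ _ ⟨𝓐', h𝓐', hfin', -, rfl⟩
  exact ⟨⋃₀ (𝓐 ∪ 𝓐'), ⟨𝓐 ∪ 𝓐', union_subset h𝓐 h𝓐', hfin.union hfin', hne.inl, rfl⟩,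
    sUnion_mono subset_union_left, sUnion_mono subset_union_right⟩

theorem finite_of_mem_joinSat (hfin : ∀ F ∈ 𝓕, F.Finite) {M : Set U} (hM : M ∈ joinSat 𝓕) :
    M.Finite := by
  obtain ⟨𝓐, h𝓐, h𝓐fin, -, rfl⟩ := hM
  exact h𝓐fin.sUnion fun F hF => hfin F (h𝓐 hF)

theorem subset_sUnion_of_mem_joinSat {M : Set U} (hM : M ∈ joinSat 𝓕) : M ⊆ ⋃₀ 𝓕 := by
  obtain ⟨𝓐, h𝓐, -, -, rfl⟩ := hM
  exact sUnion_mono h𝓐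

theorem IsLApprox.isSLApprox (h : IsLApprox R 𝓕) : IsSLApprox R 𝓕 :=
  ⟨h.1, fun M hM => h.2 M (Or.inl hM)⟩

end Approximation

section Suprema

variable {U : Type*} {R : U → U → Prop} {𝓕 : Set (Set U)}

/-- Under the sL-condition, the least compact element of `𝔠(U, R, 𝓕)` between `upp R M` and `E`. -/
def compactHullIn (R : U → U → Prop) (𝓕 : Set (Set U)) (E M : Set U) : Set U :=
  ⋂ G ∈ {G | G ∈ 𝓕 ∧ upp R M ⊆ upp R G ∧ upp R G ⊆ E}, upp R G

theorem upp_subset_compactHullIn {E M : Set U} : upp R M ⊆ compactHullIn R 𝓕 E M :=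
  subset_iInter₂ fun _ hG => hG.2.1

theorem compactHullIn_mono {E M M' : Set U} (h : upp R M ⊆ upp R M') :
    compactHullIn R 𝓕 E M ⊆ compactHullIn R 𝓕 E M' :=
  biInter_mono (fun _ hG => ⟨hG.1, h.trans hG.2.1, hG.2.2⟩) fun _ _ => subset_rfl

theorem compactHullIn_subset_upp {E M G : Set U} (hG : G ∈ 𝓕) (hMG : upp R M ⊆ upp R G)
    (hGE : upp R G ⊆ E) : compactHullIn R 𝓕 E M ⊆ upp R G :=
  biInter_subset_of_mem (t := fun G => upp R G) (show G ∈ {G | G ∈ 𝓕 ∧ _} from ⟨hG, hMG, hGE⟩)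

theorem compactHullIn_subset (htrans : Transitive R) {E M T : Set U} (hT : CFClosed R 𝓕 T)
    (hM : M.Finite) (hMT : M ⊆ T) (hTE : T ⊆ E) : compactHullIn R 𝓕 E M ⊆ T := by
  obtain ⟨F, hF, hMF, hFT, -⟩ := hT M hM hMT
  exact (compactHullIn_subset_upp hF (upp_subset_upp htrans hMF) (hFT.trans hTE)).trans hFT

theorem exists_compactHullIn_eq_upp (hCF : IsCFApprox R 𝓕) (hrefl : Reflexive R) {E M : Set U}
    (hE : CFClosed R 𝓕 E) (hM : M.Finite) (hME : M ⊆ E)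
    (hS : ∀ F ∈ 𝓕, M ⊆ upp R F → (SFam R 𝓕 M F).Nonempty) :
    ∃ G ∈ 𝓕, compactHullIn R 𝓕 E M = upp R G := by
  obtain ⟨F, hF, hMF, hFE, hF_E⟩ := hE M hM hME
  obtain ⟨G, hG, hMG, hGF, hGmin⟩ := hS F hF hMF
  refine ⟨G, hG, (compactHullIn_subset_upp hG hMG (hGF.trans hFE)).antisymm
    (subset_iInter₂ fun G' hG'mem => ?_)⟩
  obtain ⟨hG', hMG', hG'E⟩ := hG'mem
  -- compare `G` and `G'` inside a common `upp R F'`, where `S(M, F')` sits below both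
  obtain ⟨F', hF', hFG'F', -, -⟩ := hE (F ∪ G') ((hCF.2.2.1 F hF).union (hCF.2.2.1 G' hG'))
    (union_subset hF_E ((subset_upp hrefl G').trans hG'E))
  have hFF' : upp R F ⊆ upp R F' := upp_subset_upp hCF.1 (subset_union_left.trans hFG'F')
  have hG'F' : upp R G' ⊆ upp R F' := upp_subset_upp hCF.1 (subset_union_right.trans hFG'F')
  obtain ⟨G'', hG'', hMG'', -, hG''min⟩ := hS F' hF' (hMF.trans hFF')
  calc upp R G ⊆ upp R G'' :=
        hGmin G'' hG'' hMG'' ((hG''min G hG hMG (hGF.trans hFF')).trans hGF)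
    _ ⊆ upp R G' := hG''min G' hG' hMG' hG'F'

theorem cfClosed_biUnion_compactHullIn (hCF : IsCFApprox R 𝓕) (hrefl : Reflexive R) {E : Set U}
    (hE : CFClosed R 𝓕 E) {𝔐 : Set (Set U)} (h𝔐fin : ∀ M ∈ 𝔐, M.Finite) (h𝔐E : ∀ M ∈ 𝔐, M ⊆ E)
    (hne : 𝔐.Nonempty) (hdir : DirectedOn (· ⊆ ·) 𝔐)
    (hS : ∀ M ∈ 𝔐, ∀ F ∈ 𝓕, M ⊆ upp R F → (SFam R 𝓕 M F).Nonempty) :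
    CFClosed R 𝓕 (⋃ M ∈ 𝔐, compactHullIn R 𝓕 E M) := by
  intro K hK hKs
  have hdir' : DirectedOn (fun M M' => compactHullIn R 𝓕 E M ⊆ compactHullIn R 𝓕 E M') 𝔐 :=
    hdir.mono fun _ _ h => compactHullIn_mono (upp_mono h)
  obtain ⟨M, hM, hKM⟩ := hdir'.exists_mem_subset_of_finite_subset_biUnion hne hK hKs
  obtain ⟨G, hG, hMG⟩ := exists_compactHullIn_eq_upp hCF hrefl hE (h𝔐fin M hM) (h𝔐E M hM)
    (hS M hM)
  have hGs : upp R G ⊆ ⋃ M ∈ 𝔐, compactHullIn R 𝓕 E M := hMG ▸ subset_biUnion_of_mem hM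
  exact ⟨G, hG, hMG ▸ hKM, hGs, (subset_upp hrefl G).trans hGs⟩

end Suprema

/-- The poset `𝔠(U, R, 𝓕)`. -/
abbrev CFClosedSets {U : Type*} (R : U → U → Prop) (𝓕 : Set (Set U)) : Type _ :=
  {E : Set U // CFClosed R 𝓕 E}

namespace CFClosedSets

variable {U : Type*} {R : U → U → Prop} {𝓕 : Set (Set U)}

def uppOf (hCF : IsCFApprox R 𝓕) {F : Set U} (hF : F ∈ 𝓕) : CFClosedSets R 𝓕 :=
  ⟨upp R F, cfClosed_upp hCF hF⟩

theorem cfClosed_biUnion {D : Set (CFClosedSets R 𝓕)} (hne : D.Nonempty)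
    (hdir : DirectedOn (· ≤ ·) D) : CFClosed R 𝓕 (⋃ d ∈ D, (d : Set U)) := by
  intro K hK hKD
  obtain ⟨d, hd, hKd⟩ := hdir.exists_mem_subset_of_finite_subset_biUnion hne hK hKD
  obtain ⟨F, hF, hKF, hFd, hFd'⟩ := d.2 K hK hKd
  have hdD : (d : Set U) ⊆ ⋃ e ∈ D, (e : Set U) := subset_biUnion_of_mem hd
  exact ⟨F, hF, hKF, hFd.trans hdD, hFd'.trans hdD⟩

theorem isLUB_biUnion {D : Set (CFClosedSets R 𝓕)} (hne : D.Nonempty)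
    (hdir : DirectedOn (· ≤ ·) D) :
    IsLUB D ⟨⋃ d ∈ D, (d : Set U), cfClosed_biUnion hne hdir⟩ :=
  ⟨fun _ hd => subset_biUnion_of_mem hd, fun _ ht => iUnion₂_subset fun _ hd => ht hd⟩

theorem isDcpo : IsDcpo (CFClosedSets R 𝓕) :=
  fun _ hne hdir => ⟨_, isLUB_biUnion hne hdir⟩

theorem wayBelow_self_upp (hCF : IsCFApprox R 𝓕) (hrefl : Reflexive R) {F : Set U}
    (hF : F ∈ 𝓕) : WayBelow (uppOf hCF hF) (uppOf hCF hF) := by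
  intro D hne hdir s hs hFs
  rw [hs.unique (isLUB_biUnion hne hdir)] at hFs
  obtain ⟨d, hd, hFd⟩ := hdir.exists_mem_subset_of_finite_subset_biUnion hne (hCF.2.2.1 F hF)
    ((subset_upp hrefl F).trans hFs)
  exact ⟨d, hd, (upp_mono hFd).trans (d.2.upp_subset hCF.1)⟩

def compactBasis (x : CFClosedSets R 𝓕) : Set (CFClosedSets R 𝓕) :=
  {k | ∃ F ∈ 𝓕, (k : Set U) = upp R F ∧ k ≤ x}

theorem isAlgebraicDomain (hCF : IsCFApprox R 𝓕) (hrefl : Reflexive R) :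
    IsAlgebraicDomain (CFClosedSets R 𝓕) := by
  refine IsAlgebraicDomain.of_compact_basis isDcpo compactBasis ?_ ?_ ?_ ?_
  · rintro x ⟨k, -⟩ ⟨F, hF, rfl, -⟩
    exact wayBelow_self_upp hCF hrefl hF
  · intro x
    obtain ⟨F, hF, hFx, -⟩ := x.2.exists_upp_subset
    exact ⟨uppOf hCF hF, F, hF, rfl, hFx⟩
  · rintro x a ⟨F₁, hF₁, ha, hax⟩ b ⟨F₂, hF₂, hb, hbx⟩
    have hF₁x : F₁ ⊆ x := (subset_upp hrefl F₁).trans (ha ▸ hax)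
    have hF₂x : F₂ ⊆ x := (subset_upp hrefl F₂).trans (hb ▸ hbx)
    obtain ⟨F, hF, hF₁₂F, hFx, -⟩ := x.2 (F₁ ∪ F₂)
      ((hCF.2.2.1 F₁ hF₁).union (hCF.2.2.1 F₂ hF₂)) (union_subset hF₁x hF₂x)
    refine ⟨uppOf hCF hF, ⟨F, hF, rfl, hFx⟩, ?_, ?_⟩
    · change (a : Set U) ⊆ upp R F
      exact ha ▸ upp_subset_upp hCF.1 (subset_union_left.trans hF₁₂F)
    · change (b : Set U) ⊆ upp R F
      exact hb ▸ upp_subset_upp hCF.1 (subset_union_right.trans hF₁₂F)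
  · refine fun x => ⟨?_, fun t ht y hy => ?_⟩
    · rintro k ⟨-, -, -, hkx⟩
      exact hkx
    obtain ⟨F, hF, hyF, hFx, -⟩ := x.2.exists_mem_upp hy
    exact ht (a := uppOf hCF hF) ⟨F, hF, rfl, hFx⟩ hyF

theorem exists_isLeast_of_cover (hCF : IsCFApprox R 𝓕) (hrefl : Reflexive R)
    {x : CFClosedSets R 𝓕} {𝒜 : Set (CFClosedSets R 𝓕)} (h𝒜x : ∀ a ∈ 𝒜, a ≤ x)
    {𝔐 : Set (Set U)} (h𝔐fin : ∀ M ∈ 𝔐, M.Finite) (h𝔐𝒜 : ∀ M ∈ 𝔐, M ⊆ ⋃ a ∈ 𝒜, (a : Set U))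
    (hne : 𝔐.Nonempty) (hdir : DirectedOn (· ⊆ ·) 𝔐)
    (hcover : ∀ a ∈ 𝒜, (a : Set U) ⊆ ⋃ M ∈ 𝔐, upp R M)
    (hS : ∀ M ∈ 𝔐, ∀ F ∈ 𝓕, M ⊆ upp R F → (SFam R 𝓕 M F).Nonempty) :
    ∃ s, IsLeast (upperBounds 𝒜 ∩ Iic x) s := by
  have h𝔐x : ∀ M ∈ 𝔐, M ⊆ x := fun M hM => (h𝔐𝒜 M hM).trans (iUnion₂_subset h𝒜x)
  refine ⟨⟨_, cfClosed_biUnion_compactHullIn hCF hrefl x.2 h𝔐fin h𝔐x hne hdir hS⟩,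
    ⟨fun a ha y hy => ?_, ?_⟩, fun t ht => ?_⟩
  · obtain ⟨M, hM, hyM⟩ := mem_iUnion₂.1 (hcover a ha hy)
    exact mem_biUnion hM (upp_subset_compactHullIn hyM)
  · exact iUnion₂_subset fun M hM =>
      compactHullIn_subset hCF.1 x.2 (h𝔐fin M hM) (h𝔐x M hM) subset_rfl
  · exact iUnion₂_subset fun M hM => compactHullIn_subset hCF.1 t.2 (h𝔐fin M hM)
      ((h𝔐𝒜 M hM).trans (iUnion₂_subset fun a ha => ht.1 ha)) ht.2

theorem exists_isLeast_of_nonempty (hsL : IsSLApprox R 𝓕) (hrefl : Reflexive R)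
    {x : CFClosedSets R 𝓕} {𝒜 : Set (CFClosedSets R 𝓕)} (h𝒜x : ∀ a ∈ 𝒜, a ≤ x)
    (h𝒜 : 𝒜.Nonempty) : ∃ s, IsLeast (upperBounds 𝒜 ∩ Iic x) s := by
  set 𝓕𝒜 : Set (Set U) := {F | F ∈ 𝓕 ∧ ∃ a ∈ 𝒜, F ⊆ (a : Set U)}
  have hfin : ∀ M ∈ joinSat 𝓕𝒜, M.Finite :=
    fun M => finite_of_mem_joinSat fun F hF => hsL.1.2.2.1 F hF.1
  have h𝓕𝒜 : ∀ M ∈ joinSat 𝓕𝒜, M ⊆ ⋃ a ∈ 𝒜, (a : Set U) := by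
    refine fun M hM => (subset_sUnion_of_mem_joinSat hM).trans (sUnion_subset ?_)
    rintro F ⟨-, a, ha, hFa⟩
    exact hFa.trans (subset_biUnion_of_mem ha)
  have hcover : ∀ a ∈ 𝒜, (a : Set U) ⊆ ⋃ M ∈ joinSat 𝓕𝒜, upp R M := by
    intro a ha y hy
    obtain ⟨F, hF, hyF, -, hFa⟩ := a.2.exists_mem_upp hy
    exact mem_biUnion (mem_joinSat_of_mem ⟨hF, a, ha, hFa⟩) hyF
  obtain ⟨a, ha⟩ := h𝒜
  obtain ⟨F, hF, -, hFa⟩ := a.2.exists_upp_subset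
  exact exists_isLeast_of_cover hsL.1 hrefl h𝒜x hfin h𝓕𝒜
    ⟨F, mem_joinSat_of_mem ⟨hF, a, ha, hFa⟩⟩ directedOn_joinSat hcover
    fun M hM => hsL.2 M (joinSat_mono (fun _ hF => hF.1) hM)

theorem exists_isLeast_Iic (hL : IsLApprox R 𝓕) (hrefl : Reflexive R) (x : CFClosedSets R 𝓕) :
    ∃ s, IsLeast (Iic x) s := by
  simpa using exists_isLeast_of_cover hL.1 hrefl (𝒜 := ∅) (x := x) (𝔐 := {∅})
    (by simp) (by simp) (by simp) (singleton_nonempty ∅) (directedOn_singleton ∅) (by simp)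
    fun M hM F hF _ => hL.2 M (Or.inr hM) F hF (hM ▸ empty_subset _)

theorem isSLDomain (hsL : IsSLApprox R 𝓕) (hrefl : Reflexive R) :
    IsSLDomain (CFClosedSets R 𝓕) := by
  refine ⟨(isAlgebraicDomain hsL.1 hrefl).isContinuousDomain, fun x a b hax hbx => ?_⟩
  obtain ⟨s, ⟨hs_ub, hsx⟩, hs_least⟩ := exists_isLeast_of_nonempty hsL hrefl (𝒜 := {a, b})
    (by rintro _ (rfl | rfl) <;> assumption) (insert_nonempty a {b})
  refine ⟨s, hsx, hs_ub (mem_insert a _), hs_ub (mem_insert_of_mem a rfl),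
    fun t htx hat hbt => hs_least ⟨?_, htx⟩⟩
  rintro _ (rfl | rfl) <;> assumption

theorem isLDomain (hL : IsLApprox R 𝓕) (hrefl : Reflexive R) :
    IsLDomain (CFClosedSets R 𝓕) := by
  refine ⟨(isAlgebraicDomain hL.1 hrefl).isContinuousDomain, fun x 𝒜 h𝒜x => ?_⟩
  obtain ⟨s, ⟨hs_ub, hsx⟩, hs_least⟩ : ∃ s, IsLeast (upperBounds 𝒜 ∩ Iic x) s := by
    rcases 𝒜.eq_empty_or_nonempty with rfl | h𝒜
    · simpa using exists_isLeast_Iic hL hrefl x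
    · exact exists_isLeast_of_nonempty hL.isSLApprox hrefl h𝒜x h𝒜
  exact ⟨s, hsx, hs_ub, fun t htx hts => hs_least ⟨hts, htx⟩⟩

end CFClosedSets

/-- for a topological sL-approximation space (resp. topological
L-approximation space) `(U, R, 𝓕)`, the poset `(𝔠(U, R, 𝓕), ⊆)` is an
algebraic domain that is an sL-domain (resp. an L-domain). -/
theorem stmt13 {U : Type*} (R : U → U → Prop) (𝓕 : Set (Set U))
    (hCF : IsCFApprox R 𝓕) (hrefl : Reflexive R) :
    (IsSLApprox R 𝓕 →
      IsAlgebraicDomain {E : Set U // CFClosed R 𝓕 E} ∧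
      IsSLDomain {E : Set U // CFClosed R 𝓕 E}) ∧
    (IsLApprox R 𝓕 →
      IsAlgebraicDomain {E : Set U // CFClosed R 𝓕 E} ∧
      IsLDomain {E : Set U // CFClosed R 𝓕 E}) :=
  ⟨fun hsL => ⟨CFClosedSets.isAlgebraicDomain hCF hrefl, CFClosedSets.isSLDomain hsL hrefl⟩,
    fun hL => ⟨CFClosedSets.isAlgebraicDomain hCF hrefl, CFClosedSets.isLDomain hL hrefl⟩⟩
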